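/- Under the assumptions of the sufficient decrease lemma for the linearised Bregman iteration (E differentiable with L-Lipschitz gradient and bounded below, stepsizes 0 < τᵏ ≤ 2/(L+2ρ₁), ρ₁ > 0), the iterates satisfy Σ_{k=0}^∞ [ρ₁‖uᵏ⁺¹ − uᵏ‖² + D_R^symm(uᵏ⁺¹, uᵏ)] < ∞; in particular ‖uᵏ⁺¹ − uᵏ‖ → 0 and D_R^symm(uᵏ⁺¹, uᵏ) → 0. -/

import Mathlib

open RealInnerProductSpace Filter Topology

noncomputable def fenchel {n : ℕ} (J : EuclideanSpace ℝ (Fin n) → EReal)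
    (p : EuclideanSpace ℝ (Fin n)) : EReal :=
  ⨆ u, ((⟪u, p⟫ : ℝ) : EReal) - J u

def IsSubgradient {n : ℕ} (J : EuclideanSpace ℝ (Fin n) → EReal)
    (u p : EuclideanSpace ℝ (Fin n)) : Prop :=
  ∀ v, J u + ((⟪p, v - u⟫ : ℝ) : EReal) ≤ J v

def ERealConvex {n : ℕ} (J : EuclideanSpace ℝ (Fin n) → EReal) : Prop :=
  ∀ u v : EuclideanSpace ℝ (Fin n), ∀ a b : ℝ, 0 ≤ a → 0 ≤ b → a + b = 1 →
    J (a • u + b • v) ≤ (a : EReal) * J u + (b : EReal) * J v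

/-!
The descent lemma for `E` and the update rule give the sufficient decrease
`ρ₁ ‖uᵏ⁺¹ - uᵏ‖² + ⟪qᵏ⁺¹ - qᵏ, uᵏ⁺¹ - uᵏ⟫ ≤ E uᵏ - E uᵏ⁺¹`. Both terms on the left are nonnegative,
the second by monotonicity of the subdifferential of `R`, so their partial sums are bounded by
`E u⁰ - inf E`; hence they are summable and each term tends to zero.
-/

section Descent

variable {F : Type*} [NormedAddCommGroup F] [InnerProductSpace ℝ F] [CompleteSpace F]

theorem DifferentiableAt.hasDerivAt_comp_add_smul {E : F → ℝ} {x Δ : F} {t : ℝ}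
    (hE : DifferentiableAt ℝ E (x + t • Δ)) :
    HasDerivAt (fun s : ℝ => E (x + s • Δ)) ⟪gradient E (x + t • Δ), Δ⟫ t := by
  have hline : HasDerivAt (fun s : ℝ => x + s • Δ) Δ t := by
    simpa using ((hasDerivAt_id t).smul_const Δ).const_add x
  rw [inner_gradient_left]
  exact hE.hasFDerivAt.comp_hasDerivAt t hline

theorem le_add_inner_gradient_add_of_lipschitz_gradient {L : ℝ} {E : F → ℝ}
    (hE : Differentiable ℝ E) (hLip : ∀ x y, ‖gradient E x - gradient E y‖ ≤ L * ‖x - y‖)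
    (x y : F) :
    E y ≤ E x + ⟪gradient E x, y - x⟫ + L / 2 * ‖y - x‖ ^ 2 := by
  set Δ := y - x
  set g : ℝ → ℝ := fun t => E (x + t • Δ) - t * ⟪gradient E x, Δ⟫ - t ^ 2 * (L / 2 * ‖Δ‖ ^ 2)
  have hg : ∀ t, HasDerivAt g
      (⟪gradient E (x + t • Δ) - gradient E x, Δ⟫ - t * (L * ‖Δ‖ ^ 2)) t := by
    intro t
    refine (((hE _).hasDerivAt_comp_add_smul.sub
      ((hasDerivAt_id t).mul_const ⟪gradient E x, Δ⟫)).sub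
      ((hasDerivAt_pow 2 t).mul_const (L / 2 * ‖Δ‖ ^ 2))).congr_deriv ?_
    rw [inner_sub_left]
    push_cast
    ring
  have hg_nonpos : ∀ t ∈ interior (Set.Ici (0 : ℝ)),
      ⟪gradient E (x + t • Δ) - gradient E x, Δ⟫ - t * (L * ‖Δ‖ ^ 2) ≤ 0 := by
    intro t ht
    rw [interior_Ici, Set.mem_Ioi] at ht
    have hLt : ‖gradient E (x + t • Δ) - gradient E x‖ ≤ L * (t * ‖Δ‖) := by
      simpa [norm_smul, abs_of_pos ht] using hLip (x + t • Δ) x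
    nlinarith [real_inner_le_norm (gradient E (x + t • Δ) - gradient E x) Δ, norm_nonneg Δ]
  have hanti : AntitoneOn g (Set.Ici 0) :=
    antitoneOn_of_hasDerivWithinAt_nonpos (convex_Ici 0)
      (fun t _ => (hg t).continuousAt.continuousWithinAt)
      (fun t _ => (hg t).hasDerivWithinAt) hg_nonpos
  have hg01 := hanti Set.self_mem_Ici (Set.mem_Ici.mpr zero_le_one) zero_le_one
  simp only [g, one_smul, zero_smul, add_zero, Δ, add_sub_cancel] at hg01
  linarith

theorem half_add_le_one_div_of_le_two_div {L ρ τ : ℝ} (hτ : 0 < τ)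
    (hτle : τ ≤ 2 / (L + 2 * ρ)) : L / 2 + ρ ≤ 1 / τ := by
  have hpos : 0 < L + 2 * ρ := by
    by_contra! h
    linarith [div_nonpos_of_nonneg_of_nonpos zero_le_two h]
  rw [le_div_iff₀ hpos] at hτle
  rw [le_div_iff₀ hτ]
  linarith

theorem linearizedBregman_sufficient_decrease {L ρ τ : ℝ} {E : F → ℝ}
    (hE : Differentiable ℝ E) (hLip : ∀ x y, ‖gradient E x - gradient E y‖ ≤ L * ‖x - y‖)
    (hτ : 0 < τ) (hτle : τ ≤ 2 / (L + 2 * ρ)) {u u' q q' : F}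
    (hupd : q' = q - (1 / τ) • (u' - u + τ • gradient E u)) :
    ρ * ‖u' - u‖ ^ 2 + ⟪q' - q, u' - u⟫ ≤ E u - E u' := by
  have hq : q' - q = -((1 / τ) • (u' - u)) - gradient E u := by
    rw [hupd, smul_add, smul_smul, one_div_mul_cancel hτ.ne', one_smul]
    abel
  have hinner : ⟪q' - q, u' - u⟫ = -(1 / τ) * ‖u' - u‖ ^ 2 - ⟪gradient E u, u' - u⟫ := by
    rw [hq, inner_sub_left, inner_neg_left, real_inner_smul_left, real_inner_self_eq_norm_sq]
    ring
  have hstep := mul_le_mul_of_nonneg_right (half_add_le_one_div_of_le_two_div hτ hτle)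
    (sq_nonneg ‖u' - u‖)
  linarith [le_add_inner_gradient_add_of_lipschitz_gradient hE hLip u u']

end Descent

namespace IsSubgradient

variable {n : ℕ} {R : EuclideanSpace ℝ (Fin n) → EReal} {u v p q : EuclideanSpace ℝ (Fin n)}

theorem ne_top (hdom : ∃ x, R x ≠ ⊤) (hp : IsSubgradient R u p) : R u ≠ ⊤ := by
  intro htop
  obtain ⟨x, hx⟩ := hdom
  have := hp x
  rw [htop, EReal.top_add_of_ne_bot (EReal.coe_ne_bot _), top_le_iff] at this
  exact hx this

theorem inner_sub_nonneg (hR : ∀ x, R x ≠ ⊥) (hdom : ∃ x, R x ≠ ⊤)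
    (hp : IsSubgradient R u p) (hq : IsSubgradient R v q) : 0 ≤ ⟪q - p, v - u⟫ := by
  have hRu := EReal.coe_toReal (hp.ne_top hdom) (hR u)
  have hRv := EReal.coe_toReal (hq.ne_top hdom) (hR v)
  have hpv := hp v
  have hqu := hq u
  rw [← hRu, ← hRv, ← EReal.coe_add, EReal.coe_le_coe_iff] at hpv hqu
  have : ⟪q, u - v⟫ = -⟪q, v - u⟫ := by rw [← inner_neg_right, neg_sub]
  rw [inner_sub_left]
  linarith

end IsSubgradient

theorem summable_of_le_sub_succ {a f : ℕ → ℝ} (ha : ∀ k, 0 ≤ a k)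
    (hdec : ∀ k, a k ≤ f k - f (k + 1)) (hf : BddBelow (Set.range f)) : Summable a := by
  obtain ⟨B, hB⟩ := hf
  refine summable_of_sum_range_le (c := f 0 - B) ha fun N => ?_
  calc ∑ k ∈ Finset.range N, a k ≤ ∑ k ∈ Finset.range N, (f k - f (k + 1)) :=
        Finset.sum_le_sum fun k _ => hdec k
    _ = f 0 - f N := Finset.sum_range_sub' f N
    _ ≤ f 0 - B := by linarith [hB ⟨N, rfl⟩]

theorem decrease_summable_general {n : ℕ} (L ρ₁ : ℝ) (hρ₁ : 0 < ρ₁)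
    (E : EuclideanSpace ℝ (Fin n) → ℝ) (hE : Differentiable ℝ E)
    (hLip : ∀ x y, ‖gradient E x - gradient E y‖ ≤ L * ‖x - y‖)
    (hbdd : BddBelow (Set.range E))
    (R : EuclideanSpace ℝ (Fin n) → EReal)
    (hproper₁ : ∀ x, R x ≠ ⊥) (hproper₂ : ∃ x, R x ≠ ⊤)
    (u q : ℕ → EuclideanSpace ℝ (Fin n)) (τ : ℕ → ℝ)
    (hstep : ∀ k, 0 < τ k ∧ τ k ≤ 2 / (L + 2 * ρ₁))
    (hsub : ∀ k, IsSubgradient R (u k) (q k))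
    (hupd : ∀ k, q (k + 1) = q k - (1 / τ k) • (u (k + 1) - u k + τ k • gradient E (u k))) :
    Summable (fun k => ρ₁ * ‖u (k + 1) - u k‖ ^ 2 + ⟪q (k + 1) - q k, u (k + 1) - u k⟫)
      ∧ Tendsto (fun k => ‖u (k + 1) - u k‖ ^ 2) atTop (𝓝 0)
      ∧ Tendsto (fun k => ⟪q (k + 1) - q k, u (k + 1) - u k⟫) atTop (𝓝 0) := by
  set a := fun k => ρ₁ * ‖u (k + 1) - u k‖ ^ 2 + ⟪q (k + 1) - q k, u (k + 1) - u k⟫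
  have hbregman k : 0 ≤ ⟪q (k + 1) - q k, u (k + 1) - u k⟫ :=
    (hsub k).inner_sub_nonneg hproper₁ hproper₂ (hsub (k + 1))
  have hquad k : 0 ≤ ρ₁ * ‖u (k + 1) - u k‖ ^ 2 := by positivity
  have hsum : Summable a :=
    summable_of_le_sub_succ (fun k => add_nonneg (hquad k) (hbregman k))
      (fun k => linearizedBregman_sufficient_decrease hE hLip (hstep k).1 (hstep k).2 (hupd k))
      (hbdd.mono (Set.range_comp_subset_range u E))
  have ha := hsum.tendsto_atTop_zero
  refine ⟨hsum, ?_, squeeze_zero hbregman (fun k => le_add_of_nonneg_left (hquad k)) ha⟩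
  refine squeeze_zero (fun k => by positivity) (fun k => ?_) (by simpa using ha.div_const ρ₁)
  rw [le_div_iff₀ hρ₁, mul_comm]
  exact le_add_of_nonneg_right (hbregman k)

/-- Summability of decrease quantities and vanishing of the iterates gap. -/
theorem decrease_summable {n : ℕ} (L ρ₁ : ℝ) (hρ₁ : 0 < ρ₁)
    (E : EuclideanSpace ℝ (Fin n) → ℝ) (hE : Differentiable ℝ E)
    (hLip : ∀ x y, ‖gradient E x - gradient E y‖ ≤ L * ‖x - y‖)
    (hbdd : BddBelow (Set.range E))
    (R : EuclideanSpace ℝ (Fin n) → EReal)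
    (hproper₁ : ∀ x, R x ≠ ⊥) (hproper₂ : ∃ x, R x ≠ ⊤)
    (hlsc : LowerSemicontinuous R) (hconv : ERealConvex R)
    (u q : ℕ → EuclideanSpace ℝ (Fin n)) (τ : ℕ → ℝ)
    (hstep : ∀ k, 0 < τ k ∧ τ k ≤ 2 / (L + 2 * ρ₁))
    (hsub : ∀ k, IsSubgradient R (u k) (q k))
    (hupd : ∀ k, q (k + 1) = q k - (1 / τ k) • (u (k + 1) - u k + τ k • gradient E (u k))) :
    Summable (fun k => ρ₁ * ‖u (k + 1) - u k‖ ^ 2 + ⟪q (k + 1) - q k, u (k + 1) - u k⟫)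
      ∧ Tendsto (fun k => ‖u (k + 1) - u k‖ ^ 2) atTop (𝓝 0)
      ∧ Tendsto (fun k => ⟪q (k + 1) - q k, u (k + 1) - u k⟫) atTop (𝓝 0) :=
  decrease_summable_general L ρ₁ hρ₁ E hE hLip hbdd R hproper₁ hproper₂ u q τ hstep hsub hupd
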